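/- arXiv:1411.4573 — 5 statements merged into one kernel-verified Lean document; each statement's English description precedes it below -/
import Mathlib

section
/- Let D = (U ∪ {r}, A) be a digraph with nonnegative integer edge weights {w_e}, where r ∉ U is a root node, such that the weighted in-degree of every node u ∈ U is at least its weighted out-degree (∑_{e entering u} w_e ≥ ∑_{e leaving u} w_e). Then for any integer K ≥ 0 there exist finitely many out-arborescences F_1, …, F_q rooted at r (each a subgraph of D in which every node is reachable from r by a directed path) and positive integer weights γ_1, …, γ_q such that ∑_{i=1}^q γ_i = K, ∑_{i : e ∈ F_i} γ_i ≤ w_e for every edge e ∈ A, and ∑_{i : u ∈ F_i} γ_i ≥ min{K, λ_D(r,u)} for every node u ∈ U. -/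
open Finset

/-- Total weight of arcs leaving the set `X` (a directed cut). -/
def cutWeight {V : Type*} [Fintype V] [DecidableEq V] (w : V → V → ℕ) (X : Finset V) : ℕ :=
  ∑ p ∈ X, ∑ q ∈ Xᶜ, w p q

/-- `λ_D(x,y)`: the maximum number of edge-disjoint directed x→y paths in the multigraph
obtained by replacing each arc `e` by `w e` parallel copies; by Menger's theorem this equals
the minimum total weight of a directed x-y cut, which we take as the definition. -/
noncomputable def lambdaW {V : Type*} [Fintype V] [DecidableEq V]
    (w : V → V → ℕ) (x y : V) : ℕ :=
  sInf {m : ℕ | ∃ X : Finset V, x ∈ X ∧ y ∉ X ∧ cutWeight w X = m}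

/-- The node set of an arc set `F` together with the root `r`. -/
def arbVerts {V : Type*} [DecidableEq V] (r : V) (F : Finset (V × V)) : Finset V :=
  insert r (F.biUnion fun e => {e.1, e.2})

/-- `F` is an out-arborescence rooted at `r`: every node of `F` is reachable
from `r` by a directed path using arcs of `F`. -/
def IsArborescence {V : Type*} [DecidableEq V] (r : V) (F : Finset (V × V)) : Prop :=
  ∀ v ∈ arbVerts r F, Relation.ReflTransGen (fun a b => (a, b) ∈ F) r v

/-!
Adding `in(v) - out(v)` parallel arcs `v → r` for every `v ≠ r` makes the digraph Eulerian without
changing any cut that keeps `r` on the source side, and arcs into `r` are useless to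
arborescences rooted at `r`. So it suffices to find, in an Eulerian digraph, `K` arborescences
(all `γ_i = 1`) such that every node `v` lies in at least `min K λ(r, v)` of them.

This goes by induction on the total weight. Let `s ≠ r` be a node with an in-neighbour `u` and
with `λ(r, s)` least among such nodes. By Jackson's splitting lemma (proved by uncrossing tight
sets, using that cut functions of Eulerian digraphs are symmetric, hence posimodular) some pair
`(u, s), (s, y)` can be replaced by `(u, y)` without decreasing `λ(r, v)` for `v ≠ s`. A packing of
the smaller digraph is lifted back by rerouting through `s` an arborescence that uses the new
arc `(u, y)`; this either covers `s` once more or frees a copy of some arc `(x, s)`. In the latter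
case, since `λ(r, s)` drops by at most one under the splitting and, by the choice of `s`, `x` is
covered at least `min K λ(r, s)` times, adding `(x, s)` to an arborescence that contains `x` but
not `s` restores the coverage of `s`.
-/

section Counting

variable {α ι : Type*} [DecidableEq α]

def ind (T : Finset α) (a : α) : ℕ := if a ∈ T then 1 else 0

lemma ind_mono {T T' : Finset α} (h : T ⊆ T') (a : α) : ind T a ≤ ind T' a := by
  by_cases ha : a ∈ T
  · simp [ind, ha, h ha]
  · simp [ind, ha]

lemma ind_insert_le (a : α) (T : Finset α) (e : α) : ind (insert a T) e ≤ ind T e + ind {a} e := by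
  unfold ind; split_ifs <;> simp_all

lemma ind_erase_add {a : α} {T : Finset α} (ha : a ∈ T) (e : α) :
    ind (T.erase a) e + ind {a} e = ind T e := by
  unfold ind; split_ifs <;> simp_all

lemma ind_singleton_add_ind_singleton_le {a b : α} (hab : a ≠ b) (e : α) :
    ind {a} e + ind {b} e ≤ 1 := by
  unfold ind; split_ifs <;> simp_all

lemma sum_ind_singleton (P : Finset α) (a : α) : ∑ e ∈ P, ind {a} e = ind P a := by
  simp [ind]

variable [Fintype ι]

def memCount (S : ι → Finset α) (a : α) : ℕ := #{i | a ∈ S i}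

lemma memCount_mono {S S' : ι → Finset α} (h : ∀ i, S i ⊆ S' i) (a : α) :
    memCount S a ≤ memCount S' a :=
  card_le_card fun i hi => by simp_all [h i _]

lemma memCount_update_add_ind [DecidableEq ι] (S : ι → Finset α) (i : ι) (T : Finset α) (a : α) :
    memCount (Function.update S i T) a + ind (S i) a = memCount S a + ind T a := by
  simp only [memCount, ind, card_filter]
  rw [← add_sum_erase _ _ (mem_univ i), ← add_sum_erase _ _ (mem_univ i), Function.update_self,
    sum_congr rfl fun j hj => by rw [Function.update_of_ne (ne_of_mem_erase hj)]]
  ring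

lemma exists_mem_and_notMem_of_memCount_lt {S : ι → Finset α} {a b : α}
    (h : memCount S a < memCount S b) : ∃ i, b ∈ S i ∧ a ∉ S i := by
  by_contra! hab
  exact h.not_ge (card_le_card fun i hi => by simp_all)

end Counting

section Cuts

variable {V : Type*}

def arcWeight (w : V → V → ℕ) (A B : Finset V) : ℕ := ∑ p ∈ A, ∑ q ∈ B, w p q

lemma single_le_arcWeight (w : V → V → ℕ) {a b : V} {A B : Finset V} (ha : a ∈ A) (hb : b ∈ B) :
    w a b ≤ arcWeight w A B :=
  (single_le_sum (fun _ _ => Nat.zero_le _) hb).trans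
    (single_le_sum (f := fun p => ∑ q ∈ B, w p q) (fun _ _ => Nat.zero_le _) ha)

variable [Fintype V]

def Eulerian (w : V → V → ℕ) : Prop := ∀ v, ∑ b, w v b = ∑ a, w a v

variable [DecidableEq V]

lemma arcWeight_eq_sum_ite (w : V → V → ℕ) (A B : Finset V) :
    arcWeight w A B = ∑ p, ∑ q, if p ∈ A ∧ q ∈ B then w p q else 0 := by
  simp [arcWeight, ite_and, sum_ite_mem]

lemma cutWeight_eq_arcWeight (w : V → V → ℕ) (X : Finset V) :
    cutWeight w X = arcWeight w X Xᶜ := rfl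

lemma cutWeight_eq_sum_product (w : V → V → ℕ) (X : Finset V) :
    cutWeight w X = ∑ e ∈ X ×ˢ Xᶜ, w e.1 e.2 := by
  rw [sum_product]; rfl

lemma cutWeight_univ_erase (w : V → V → ℕ) (v : V) :
    cutWeight w (univ.erase v) = ∑ a ∈ univ.erase v, w a v := by
  have : (univ.erase v)ᶜ = {v} := by ext; simp
  simp [cutWeight, this]

lemma cutWeight_add_cutWeight (w : V → V → ℕ) (X Y : Finset V) :
    cutWeight w X + cutWeight w Y = cutWeight w (X ∪ Y) + cutWeight w (X ∩ Y) +
      arcWeight w (X \ Y) (Y \ X) + arcWeight w (Y \ X) (X \ Y) := by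
  simp only [cutWeight_eq_arcWeight, arcWeight_eq_sum_ite, ← sum_add_distrib]
  refine sum_congr rfl fun p _ => sum_congr rfl fun q _ => ?_
  by_cases hpX : p ∈ X <;> by_cases hpY : p ∈ Y <;> by_cases hqX : q ∈ X <;>
    by_cases hqY : q ∈ Y <;> simp [hpX, hpY, hqX, hqY]

lemma cutWeight_add_sum_erase (w : V → V → ℕ) {T : Finset V} {s : V} (hs : s ∈ T) :
    cutWeight w T + ∑ p ∈ T.erase s, w p s = cutWeight w (T.erase s) + ∑ q ∈ Tᶜ, w s q := by
  have hcompl : (T.erase s)ᶜ = insert s Tᶜ := by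
    ext x; by_cases hx : x = s <;> simp [hx, hs]
  rw [cutWeight, cutWeight, hcompl, ← add_sum_erase _ _ hs]
  simp only [sum_insert (notMem_compl.2 hs), sum_add_distrib]
  ring

lemma Eulerian.cutWeight_compl {w : V → V → ℕ} (hE : Eulerian w) (X : Finset V) :
    cutWeight w Xᶜ = cutWeight w X := by
  have hout : ∑ p ∈ X, ∑ q, w p q = arcWeight w X X + arcWeight w X Xᶜ := by
    simp only [arcWeight, ← sum_add_distrib, sum_add_sum_compl]
  have hin : ∑ p ∈ X, ∑ q, w q p = arcWeight w X X + arcWeight w Xᶜ X := by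
    rw [sum_comm, ← sum_add_sum_compl X]
    rfl
  rw [sum_congr rfl fun v _ => hE v] at hout
  simp only [cutWeight, compl_compl]
  simp only [arcWeight] at hin hout
  omega

lemma Eulerian.cutWeight_add_cutWeight {w : V → V → ℕ} (hE : Eulerian w) (X Y : Finset V) :
    cutWeight w X + cutWeight w Y = cutWeight w (X \ Y) + cutWeight w (Y \ X) +
      arcWeight w (X ∪ Y)ᶜ (X ∩ Y) + arcWeight w (X ∩ Y) (X ∪ Y)ᶜ := by
  have h := _root_.cutWeight_add_cutWeight w Xᶜ Y
  have e₁ : Xᶜ ∪ Y = (X \ Y)ᶜ := by ext; simp; tauto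
  have e₂ : Xᶜ ∩ Y = Y \ X := by ext; simp; tauto
  have e₃ : Xᶜ \ Y = (X ∪ Y)ᶜ := by ext; simp
  have e₄ : Y \ Xᶜ = X ∩ Y := by ext; simp; tauto
  rw [e₁, e₂, e₃, e₄, hE.cutWeight_compl, hE.cutWeight_compl] at h
  omega

lemma eulerian_of_forall_ne {w : V → V → ℕ} (r : V)
    (h : ∀ v, v ≠ r → ∑ b, w v b = ∑ a, w a v) : Eulerian w := by
  intro v
  by_cases hv : v = r
  · subst hv
    have htotal : ∑ p, ∑ q, w p q = ∑ p, ∑ q, w q p := sum_comm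
    have hrest : ∑ p ∈ univ.erase v, ∑ q, w p q = ∑ p ∈ univ.erase v, ∑ q, w q p :=
      sum_congr rfl fun p hp => h p (ne_of_mem_erase hp)
    rw [← add_sum_erase _ _ (mem_univ v), ← add_sum_erase _ (fun p => ∑ q, w q p) (mem_univ v),
      hrest] at htotal
    omega
  · exact h v hv

lemma Eulerian.exists_in_neighbor_iff {w : V → V → ℕ} (hE : Eulerian w) (s : V) :
    (∃ u, u ≠ s ∧ 1 ≤ w u s) ↔ ∃ y, y ≠ s ∧ 1 ≤ w s y := by
  have h := hE s
  rw [← add_sum_erase _ _ (mem_univ s), ← add_sum_erase _ (fun a => w a s) (mem_univ s)] at h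
  have key : ∀ f : V → ℕ, (∃ a, a ≠ s ∧ 1 ≤ f a) ↔ ∑ a ∈ univ.erase s, f a ≠ 0 := fun f => by
    simp [sum_eq_zero_iff, Nat.one_le_iff_ne_zero]
  rw [key (fun a => w a s), key (w s)]
  omega

end Cuts

section Separation

variable {V : Type*}

def Separates (r : V) (S : Finset V) (v : V) : Prop := (r ∈ S ↔ v ∉ S)

variable [DecidableEq V]

lemma separates_inter_union_or_sdiff {r v v' : V} {T T' : Finset V}
    (h : Separates r T v) (h' : Separates r T' v') :
    (Separates r (T ∩ T') v ∧ Separates r (T ∪ T') v') ∨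
    (Separates r (T ∩ T') v' ∧ Separates r (T ∪ T') v) ∨
    (Separates r (T \ T') v ∧ Separates r (T' \ T) v') ∨
    (Separates r (T \ T') v' ∧ Separates r (T' \ T) v) := by
  simp only [Separates, mem_inter, mem_union, mem_sdiff] at *
  by_cases r ∈ T <;> by_cases r ∈ T' <;> by_cases v ∈ T <;> by_cases v ∈ T' <;>
    by_cases v' ∈ T <;> by_cases v' ∈ T' <;> simp_all

variable [Fintype V]

lemma lambdaW_le_cutWeight (w : V → V → ℕ) {r v : V} {X : Finset V} (hr : r ∈ X) (hv : v ∉ X) :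
    lambdaW w r v ≤ cutWeight w X :=
  Nat.sInf_le ⟨X, hr, hv, rfl⟩

lemma exists_cutWeight_eq_lambdaW (w : V → V → ℕ) {r v : V} (hv : v ≠ r) :
    ∃ X, r ∈ X ∧ v ∉ X ∧ cutWeight w X = lambdaW w r v :=
  Nat.sInf_mem (s := {m | ∃ X : Finset V, r ∈ X ∧ v ∉ X ∧ cutWeight w X = m})
    ⟨_, univ.erase v, mem_erase.2 ⟨hv.symm, mem_univ r⟩, notMem_erase v _, rfl⟩

lemma Eulerian.lambdaW_le_cutWeight_of_separates {w : V → V → ℕ} (hE : Eulerian w) {r v : V}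
    {S : Finset V} (h : Separates r S v) : lambdaW w r v ≤ cutWeight w S := by
  by_cases hr : r ∈ S
  · exact lambdaW_le_cutWeight w hr (h.1 hr)
  · rw [← hE.cutWeight_compl]
    exact lambdaW_le_cutWeight w (mem_compl.2 hr) (by simpa [Separates, hr] using h)

end Separation

section SplittingOff

variable {V : Type*} [DecidableEq V] {w : V → V → ℕ} {u s y : V}

def SplitsOff (c c' : V × V → ℕ) (u s y : V) : Prop :=
  ∀ e, c' e + ind {(u, s)} e + ind {(s, y)} e = c e + ind {(u, y)} e

def splitOff (w : V → V → ℕ) (u s y : V) (a b : V) : ℕ :=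
  w a b + ind {(u, y)} (a, b) - ind {(u, s)} (a, b) - ind {(s, y)} (a, b)

lemma splitsOff_splitOff (hus : u ≠ s) (hws : 1 ≤ w u s) (hwy : 1 ≤ w s y) :
    SplitsOff (Function.uncurry w) (Function.uncurry (splitOff w u s y)) u s y := by
  rintro ⟨a, b⟩
  simp only [Function.uncurry_apply_pair, splitOff, ind, mem_singleton, Prod.mk.injEq]
  split_ifs <;> simp_all

lemma sum_splitOff_add_ind (hus : u ≠ s) (hws : 1 ≤ w u s) (hwy : 1 ≤ w s y)
    (P : Finset (V × V)) :
    ∑ e ∈ P, splitOff w u s y e.1 e.2 + ind P (u, s) + ind P (s, y) =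
      ∑ e ∈ P, w e.1 e.2 + ind P (u, y) := by
  rw [← sum_ind_singleton P (u, s), ← sum_ind_singleton P (s, y), ← sum_ind_singleton P (u, y),
    ← sum_add_distrib, ← sum_add_distrib, ← sum_add_distrib]
  exact sum_congr rfl fun e _ => splitsOff_splitOff hus hws hwy e

variable [Fintype V]

lemma sum_splitOff_lt (hus : u ≠ s) (hws : 1 ≤ w u s) (hwy : 1 ≤ w s y) :
    ∑ e : V × V, splitOff w u s y e.1 e.2 < ∑ e : V × V, w e.1 e.2 := by
  have := sum_splitOff_add_ind hus hws hwy univ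
  simp only [ind, mem_univ, if_true] at this
  omega

lemma eulerian_splitOff (hE : Eulerian w) (hus : u ≠ s) (hws : 1 ≤ w u s) (hwy : 1 ≤ w s y) :
    Eulerian (splitOff w u s y) := by
  intro v
  have hout := sum_splitOff_add_ind hus hws hwy ({v} ×ˢ univ)
  have hin := sum_splitOff_add_ind hus hws hwy (univ ×ˢ {v})
  simp only [sum_product, sum_singleton, ind, mem_product, mem_singleton, mem_univ, and_true,
    true_and] at hout hin
  have := hE v
  split_ifs at hout hin <;> omega

lemma cutWeight_splitOff_add (hus : u ≠ s) (hws : 1 ≤ w u s) (hwy : 1 ≤ w s y) (X : Finset V) :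
    cutWeight (splitOff w u s y) X + (if u ∈ X ∧ s ∉ X then 1 else 0) +
        (if s ∈ X ∧ y ∉ X then 1 else 0) =
      cutWeight w X + (if u ∈ X ∧ y ∉ X then 1 else 0) := by
  simpa [cutWeight_eq_sum_product, ind] using sum_splitOff_add_ind hus hws hwy (X ×ˢ Xᶜ)

lemma lambdaW_le_lambdaW_splitOff_add_one (hus : u ≠ s) (hws : 1 ≤ w u s) (hwy : 1 ≤ w s y)
    {r v : V} (hv : v ≠ r) : lambdaW w r v ≤ lambdaW (splitOff w u s y) r v + 1 := by
  obtain ⟨X, hrX, hvX, hX⟩ := exists_cutWeight_eq_lambdaW (splitOff w u s y) hv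
  have hcut := cutWeight_splitOff_add hus hws hwy X
  have := lambdaW_le_cutWeight w hrX hvX
  have : (if u ∈ X ∧ s ∉ X then 1 else 0) + (if s ∈ X ∧ y ∉ X then 1 else 0) ≤ 1 := by
    by_cases hsX : s ∈ X <;> simp only [hsX] <;> split_ifs <;> simp_all
  omega

end SplittingOff

section Jackson

variable {V : Type*} [Fintype V] [DecidableEq V] {w : V → V → ℕ} {r u s y : V}

/-- Splitting off `(u, s), (s, y)` with `y ∉ T` would decrease the cut of `T` below
`λ(r, v)`. -/
def IsBlockingSet (w : V → V → ℕ) (r u s : V) (T : Finset V) : Prop :=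
  s ∈ T ∧ u ∉ T ∧ ∃ v, v ≠ s ∧ Separates r T v ∧ cutWeight w T = lambdaW w r v

lemma exists_isBlockingSet_of_lambdaW_lt (hE : Eulerian w) (hus : u ≠ s) (hws : 1 ≤ w u s)
    (hwy : 1 ≤ w s y) {v : V} (hvr : v ≠ r) (hvs : v ≠ s)
    (hlt : lambdaW (splitOff w u s y) r v < lambdaW w r v) :
    ∃ T, IsBlockingSet w r u s T ∧ y ∉ T := by
  obtain ⟨X, hrX, hvX, hX⟩ := exists_cutWeight_eq_lambdaW (splitOff w u s y) hvr
  have hcut := cutWeight_splitOff_add hus hws hwy X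
  have hle := lambdaW_le_cutWeight w hrX hvX
  have hsep : Separates r X v := by simp [Separates, hrX, hvX]
  by_cases hsX : s ∈ X
  · have hyX : y ∉ X := by intro hyX; simp [hsX, hyX] at hcut; omega
    have huX : u ∉ X := by intro huX; simp [hsX, hyX, huX] at hcut; omega
    simp only [hsX, hyX, huX, not_true, not_false_eq_true, and_true, and_false, if_true,
      if_false] at hcut
    exact ⟨X, ⟨hsX, huX, v, hvs, hsep, by omega⟩, hyX⟩
  · have huX : u ∈ X := by by_contra huX; simp [hsX, huX] at hcut; omega
    have hyX : y ∈ X := by by_contra hyX; simp [hsX, hyX, huX] at hcut; omega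
    simp only [hsX, hyX, huX, not_true, not_false_eq_true, and_true, and_false, if_true,
      if_false] at hcut
    refine ⟨Xᶜ, ⟨mem_compl.2 hsX, notMem_compl.2 huX, v, hvs, ?_, ?_⟩, notMem_compl.2 hyX⟩
    · simp [Separates, hrX, hvX]
    · rw [hE.cutWeight_compl]; omega

lemma IsBlockingSet.inter (hE : Eulerian w) (hws : 1 ≤ w u s) {T T' : Finset V}
    (hT : IsBlockingSet w r u s T) (hT' : IsBlockingSet w r u s T') :
    IsBlockingSet w r u s (T ∩ T') := by
  obtain ⟨hsT, huT, v, hvs, hv, hTv⟩ := hT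
  obtain ⟨hsT', huT', v', hvs', hv', hTv'⟩ := hT'
  refine ⟨mem_inter.2 ⟨hsT, hsT'⟩, fun h => huT (mem_inter.1 h).1, ?_⟩
  have hsub := cutWeight_add_cutWeight w T T'
  have hposi := hE.cutWeight_add_cutWeight T T'
  have hus : w u s ≤ arcWeight w (T ∪ T')ᶜ (T ∩ T') :=
    single_le_arcWeight w (by simp [huT, huT']) (by simp [hsT, hsT'])
  -- Either `T ∩ T'` and `T ∪ T'` separate, and submodularity forces `T ∩ T'` to be tight, or
  -- `T \ T'` and `T' \ T` do, and posimodularity with the arc `(u, s)` is contradictory.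
  rcases separates_inter_union_or_sdiff hv hv' with
    ⟨h₁, h₂⟩ | ⟨h₁, h₂⟩ | ⟨h₁, h₂⟩ | ⟨h₁, h₂⟩ <;>
    have := hE.lambdaW_le_cutWeight_of_separates h₁ <;>
    have := hE.lambdaW_le_cutWeight_of_separates h₂
  · exact ⟨v, hvs, h₁, by omega⟩
  · exact ⟨v', hvs', h₁, by omega⟩
  all_goals omega

lemma exists_isBlockingSet_forall_notMem (hE : Eulerian w) (hws : 1 ≤ w u s) {N : Finset V}
    (hN : N.Nonempty) (h : ∀ y ∈ N, ∃ T, IsBlockingSet w r u s T ∧ y ∉ T) :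
    ∃ T, IsBlockingSet w r u s T ∧ ∀ y ∈ N, y ∉ T := by
  induction hN using Finset.Nonempty.cons_induction with
  | singleton a =>
    obtain ⟨T, hT, haT⟩ := h a (mem_singleton_self a)
    exact ⟨T, hT, by simpa⟩
  | cons a N ha hN ih =>
    obtain ⟨T, hT, haT⟩ := h a (mem_cons_self a N)
    obtain ⟨T', hT', hNT'⟩ := ih fun y hy => h y (mem_cons_of_mem hy)
    refine ⟨T ∩ T', hT.inter hE hws hT', fun y hy hyT => ?_⟩
    rcases mem_cons.1 hy with rfl | hy
    · exact haT (mem_inter.1 hyT).1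
    · exact hNT' y hy (mem_inter.1 hyT).2

/-- If all out-neighbours of `s` lay outside `T`, then, as `s` also has an in-neighbour `u ∉ T`,
removing `s` from `T` would strictly decrease the cut, yet `T.erase s` still separates `r`
from `v`. -/
lemma IsBlockingSet.exists_out_neighbor_mem (hE : Eulerian w) (hsr : s ≠ r) (hws : 1 ≤ w u s)
    {T : Finset V} (hT : IsBlockingSet w r u s T) : ∃ y ∈ T, y ≠ s ∧ 1 ≤ w s y := by
  obtain ⟨hsT, huT, v, hvs, hv, hTv⟩ := hT
  by_contra! hT
  have hle := hE.lambdaW_le_cutWeight_of_separates (show Separates r (T.erase s) v by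
    simpa [Separates, hsr.symm, hvs] using hv)
  have hcut := cutWeight_add_sum_erase w hsT
  have hout : ∑ q, w s q = w s s + ∑ q ∈ Tᶜ, w s q := by
    rw [← sum_add_sum_compl T, ← add_sum_erase _ _ hsT,
      sum_eq_zero fun q hq => Nat.lt_one_iff.1 (hT q (mem_of_mem_erase hq) (ne_of_mem_erase hq))]
    rfl
  have hin : w s s + ∑ p ∈ T.erase s, w p s + w u s ≤ ∑ p, w p s := by
    rw [← sum_add_sum_compl T, ← add_sum_erase _ _ hsT]
    exact Nat.add_le_add_left (single_le_sum (f := fun p => w p s) (fun _ _ => Nat.zero_le _)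
      (mem_compl.2 huT)) _
  have := hE s
  omega

theorem Eulerian.exists_splitOff_lambdaW_le (hE : Eulerian w) (hsr : s ≠ r) (hus : u ≠ s)
    (hws : 1 ≤ w u s) :
    ∃ y, y ≠ s ∧ 1 ≤ w s y ∧
      ∀ v, v ≠ r → v ≠ s → lambdaW w r v ≤ lambdaW (splitOff w u s y) r v := by
  by_contra! hbad
  set N := univ.filter fun y => y ≠ s ∧ 1 ≤ w s y
  have hN : N.Nonempty := by
    obtain ⟨y, hy⟩ := (hE.exists_in_neighbor_iff s).1 ⟨u, hus, hws⟩
    exact ⟨y, by simpa [N] using hy⟩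
  obtain ⟨T, hT, hNT⟩ := exists_isBlockingSet_forall_notMem hE hws hN fun y hy => by
    obtain ⟨hys, hwy⟩ := (mem_filter.1 hy).2
    obtain ⟨v, hvr, hvs, hlt⟩ := hbad y hys hwy
    exact exists_isBlockingSet_of_lambdaW_lt hE hus hws hwy hvr hvs hlt
  obtain ⟨y, hyT, hys, hwy⟩ := hT.exists_out_neighbor_mem hE hsr hws
  exact hNT y (by simp [N, hys, hwy]) hyT

end Jackson

section Reachability

variable {V : Type*} {r : V} {F T : Finset (V × V)}

def Reach (r : V) (F : Finset (V × V)) (v : V) : Prop :=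
  Relation.ReflTransGen (fun a b => (a, b) ∈ F) r v

lemma Reach.mono (h : F ⊆ T) {v : V} (hv : Reach r F v) : Reach r T v :=
  Relation.ReflTransGen.mono (fun _ _ hab => h hab) _ _ hv

lemma Reach.of_simulation (hstep : ∀ a b, (a, b) ∈ F → Reach r T a → Reach r T b) {v : V}
    (h : Reach r F v) : Reach r T v := by
  induction h with
  | refl => exact .refl
  | tail _ hab ih => exact hstep _ _ hab ih

variable [DecidableEq V]

lemma Reach.filter_fst_ne {v : V} (h : Reach r F v) : Reach r (F.filter fun e => e.1 ≠ v) v := by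
  suffices ∀ b, Reach r F b →
      Reach r (F.filter fun e => e.1 ≠ v) b ∨ Reach r (F.filter fun e => e.1 ≠ v) v from
    (this v h).elim id id
  intro b hb
  induction hb with
  | refl => exact .inl .refl
  | @tail a c _ hac ih =>
    rcases ih with ih | ih
    · by_cases hav : a = v
      · exact .inr (hav ▸ ih)
      · exact .inl (ih.tail (mem_filter.2 ⟨hac, hav⟩))
    · exact .inr ih

lemma Reach.filter_snd_ne {v b : V} (h : Reach r F v) (hb : ¬ Reach r F b) :
    Reach r (F.filter fun e => e.2 ≠ b) v := by
  induction h with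
  | refl => exact .refl
  | @tail a c hra hac ih =>
    exact ih.tail (mem_filter.2 ⟨hac, fun hcb => hb (hcb ▸ hra.tail hac)⟩)

lemma Reach.erase_out_arc {u y : V} (h : Reach r F u) : Reach r (F.erase (u, y)) u :=
  h.filter_fst_ne.mono fun e he => by
    obtain ⟨he, heu⟩ := mem_filter.1 he
    exact mem_erase.2 ⟨fun h => heu (by rw [h]), he⟩

lemma Reach.erase_of_not_reach {u z s : V} (h : Reach r F u) (hs : ¬ Reach r F s) :
    Reach r (F.erase (z, s)) u :=
  (h.filter_snd_ne hs).mono fun e he => by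
    obtain ⟨he, hes⟩ := mem_filter.1 he
    exact mem_erase.2 ⟨fun h => hes (by rw [h]), he⟩

end Reachability

section Arborescences

variable {V : Type*} {r u s y : V} {F T A : Finset (V × V)}

def Loopless (F : Finset (V × V)) : Prop := ∀ e ∈ F, e.1 ≠ e.2

lemma Loopless.subset (hF : Loopless F) (h : T ⊆ F) : Loopless T :=
  fun e he => hF e (h he)

variable [DecidableEq V]

lemma root_mem_arbVerts (r : V) (F : Finset (V × V)) : r ∈ arbVerts r F :=
  mem_insert_self r _

lemma fst_mem_arbVerts {e : V × V} (he : e ∈ F) : e.1 ∈ arbVerts r F :=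
  mem_insert_of_mem (mem_biUnion.2 ⟨e, he, by simp⟩)

lemma snd_mem_arbVerts {e : V × V} (he : e ∈ F) : e.2 ∈ arbVerts r F :=
  mem_insert_of_mem (mem_biUnion.2 ⟨e, he, by simp⟩)

lemma mem_arbVerts_of_reach {v : V} (h : Reach r F v) : v ∈ arbVerts r F := by
  rcases Relation.ReflTransGen.cases_tail h with rfl | ⟨a, -, ha⟩
  · exact root_mem_arbVerts _ F
  · exact snd_mem_arbVerts (e := (a, v)) ha

lemma IsArborescence.reach (hF : IsArborescence r F) {v : V} (hv : v ∈ arbVerts r F) :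
    Reach r F v :=
  hF v hv

lemma IsArborescence.exists_mem_snd_eq (hF : IsArborescence r F) {v : V}
    (hv : v ∈ arbVerts r F) (hvr : v ≠ r) : ∃ p, (p, v) ∈ F := by
  rcases Relation.ReflTransGen.cases_tail (hF.reach hv) with h | ⟨p, -, hp⟩
  · exact absurd h hvr
  · exact ⟨p, hp⟩

lemma IsArborescence.of_simulation (hF : IsArborescence r F)
    (hstep : ∀ a b, (a, b) ∈ F → Reach r T a → Reach r T b)
    (hnew : ∀ e ∈ T, e ∉ F → Reach r T e.1) :
    IsArborescence r T ∧ arbVerts r F ⊆ arbVerts r T := by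
  have hreach : ∀ v ∈ arbVerts r F, Reach r T v := fun v hv => (hF.reach hv).of_simulation hstep
  have htail : ∀ e ∈ T, Reach r T e.1 := fun e he => by
    by_cases heF : e ∈ F
    · exact hreach _ (fst_mem_arbVerts heF)
    · exact hnew e he heF
  refine ⟨fun v hv => ?_, fun v hv => mem_arbVerts_of_reach (hreach v hv)⟩
  simp only [arbVerts, mem_insert, mem_biUnion, mem_singleton] at hv
  rcases hv with rfl | ⟨e, he, rfl | rfl⟩
  · exact .refl
  · exact htail e he
  · exact (htail e he).tail he

lemma IsArborescence.insert_arc (hF : IsArborescence r F) {x : V} (hx : x ∈ arbVerts r F)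
    (s : V) :
    IsArborescence r (insert (x, s) F) ∧ arbVerts r F ⊆ arbVerts r (insert (x, s) F) := by
  have hstep : ∀ a b, (a, b) ∈ F → Reach r (insert (x, s) F) a → Reach r (insert (x, s) F) b :=
    fun a b hab ha => ha.tail (mem_insert_of_mem hab)
  refine hF.of_simulation hstep fun e he heF => ?_
  rw [(mem_insert.1 he).resolve_right heF]
  exact (hF.reach hx).of_simulation hstep

lemma IsArborescence.reroute (hF : IsArborescence r F) (hAF : A ⊆ F)
    (hA : ∀ e ∈ F, e ∉ A → e = (u, y) ∨ e.2 = s) (hu : Reach r A u) :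
    IsArborescence r (insert (u, s) (insert (s, y) A)) ∧
      arbVerts r F ⊆ arbVerts r (insert (u, s) (insert (s, y) A)) := by
  have hu' := hu.mono ((subset_insert (s, y) A).trans (subset_insert (u, s) _))
  have hs := hu'.tail (mem_insert_self _ _)
  refine hF.of_simulation (fun a b hab ha => ?_) fun e he heF => ?_
  · by_cases hA' : (a, b) ∈ A
    · exact ha.tail (mem_insert_of_mem (mem_insert_of_mem hA'))
    rcases hA _ hab hA' with h | h
    · cases h
      exact hs.tail (mem_insert_of_mem (mem_insert_self _ _))
    · exact (show b = s from h) ▸ hs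
  · rcases mem_insert.1 he with rfl | he
    · exact hu'
    rcases mem_insert.1 he with rfl | he
    · exact hs
    · exact absurd (hAF he) heF

lemma IsArborescence.shortcut (hF : IsArborescence r F) (hs : Reach r (F.erase (u, y)) s) :
    IsArborescence r (insert (s, y) (F.erase (u, y))) ∧
      arbVerts r F ⊆ arbVerts r (insert (s, y) (F.erase (u, y))) := by
  have hs' := hs.mono (subset_insert (s, y) _)
  refine hF.of_simulation (fun a b hab ha => ?_) fun e he heF => ?_
  · by_cases h : (a, b) = (u, y)
    · cases h
      exact hs'.tail (mem_insert_self _ _)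
    · exact ha.tail (mem_insert_of_mem (mem_erase.2 ⟨h, hab⟩))
  · rcases mem_insert.1 he with rfl | he
    · exact hs'
    · exact absurd (mem_of_mem_erase he) heF

lemma IsArborescence.filter_snd_ne (hF : IsArborescence r F) :
    IsArborescence r (F.filter fun e => e.2 ≠ r) ∧
      arbVerts r F ⊆ arbVerts r (F.filter fun e => e.2 ≠ r) := by
  refine hF.of_simulation (fun a b hab ha => ?_) fun e he heF =>
    absurd (mem_of_mem_filter e he) heF
  by_cases hb : b = r
  · exact hb ▸ .refl
  · exact ha.tail (mem_filter.2 ⟨hab, hb⟩)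

lemma Loopless.insert (hF : Loopless F) {a b : V} (hab : a ≠ b) : Loopless (insert (a, b) F) :=
  forall_mem_insert _ _ _ |>.2 ⟨hab, hF⟩

end Arborescences

section Packings

variable {V ι : Type*} [DecidableEq V] [Fintype ι] {r : V} {c c' : V × V → ℕ}
  {F : ι → Finset (V × V)}

def coverage (r : V) (F : ι → Finset (V × V)) : V → ℕ := memCount (arbVerts r ∘ F)

structure IsPacking (r : V) (c : V × V → ℕ) (F : ι → Finset (V × V)) : Prop where
  isArborescence : ∀ i, IsArborescence r (F i)
  loopless : ∀ i, Loopless (F i)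
  memCount_le : ∀ e, memCount F e ≤ c e

lemma coverage_root (r : V) (F : ι → Finset (V × V)) : coverage r F r = Fintype.card ι := by
  simp [coverage, memCount, root_mem_arbVerts]

lemma IsPacking.mono (hF : IsPacking r c F) (h : c ≤ c') : IsPacking r c' F :=
  { hF with memCount_le := fun e => (hF.memCount_le e).trans (h e) }

lemma IsPacking.pos_of_mem (hF : IsPacking r c F) {i : ι} {e : V × V} (he : e ∈ F i) :
    0 < c e :=
  (card_pos.2 ⟨i, mem_filter.2 ⟨mem_univ i, he⟩⟩).trans_le (hF.memCount_le e)

lemma isPacking_empty (r : V) (c : V × V → ℕ) : IsPacking r c fun _ : ι => ∅ where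
  isArborescence _ v hv := by
    obtain rfl : v = r := by simpa [arbVerts] using hv
    exact .refl
  loopless _ := by simp [Loopless]
  memCount_le e := by simp [memCount]

lemma IsPacking.filter_snd_ne (hF : IsPacking r c F) (hc : ∀ e : V × V, e.2 ≠ r → c e ≤ c' e) :
    IsPacking r c' (fun i => (F i).filter fun e => e.2 ≠ r) ∧
      ∀ v, coverage r F v ≤ coverage r (fun i => (F i).filter fun e => e.2 ≠ r) v := by
  refine ⟨⟨fun i => (hF.isArborescence i).filter_snd_ne.1,
    fun i => (hF.loopless i).subset (filter_subset _ _), fun e => ?_⟩,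
    memCount_mono fun i => (hF.isArborescence i).filter_snd_ne.2⟩
  by_cases he : e.2 = r
  · simp [memCount, he]
  · exact (memCount_mono (fun i => filter_subset _ (F i)) e).trans
      ((hF.memCount_le e).trans (hc e he))

variable [DecidableEq ι]

lemma coverage_update_add_ind (F : ι → Finset (V × V)) (i : ι) (T : Finset (V × V)) (v : V) :
    coverage r (Function.update F i T) v + ind (arbVerts r (F i)) v =
      coverage r F v + ind (arbVerts r T) v := by
  rw [coverage, Function.comp_update]
  exact memCount_update_add_ind _ i _ v

lemma coverage_le_coverage_update {i : ι} {T : Finset (V × V)}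
    (h : arbVerts r (F i) ⊆ arbVerts r T) (v : V) :
    coverage r F v ≤ coverage r (Function.update F i T) v := by
  have := coverage_update_add_ind (r := r) F i T v
  have := ind_mono h v
  omega

lemma coverage_update_of_notMem {i : ι} {T : Finset (V × V)} {v : V}
    (hvF : v ∉ arbVerts r (F i)) (hvT : v ∈ arbVerts r T) :
    coverage r (Function.update F i T) v = coverage r F v + 1 := by
  simpa [ind, hvF, hvT] using coverage_update_add_ind (r := r) F i T v

lemma IsPacking.update (hF : IsPacking r c F) (i : ι) {T : Finset (V × V)}
    (hT : IsArborescence r T) (hTl : Loopless T) (hc : ∀ e, c e + ind T e ≤ c' e + ind (F i) e) :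
    IsPacking r c' (Function.update F i T) where
  isArborescence := (Function.forall_update_iff F fun _ T => IsArborescence r T).2
    ⟨hT, fun j _ => hF.isArborescence j⟩
  loopless := (Function.forall_update_iff F fun _ T => Loopless T).2
    ⟨hTl, fun j _ => hF.loopless j⟩
  memCount_le e := by
    have := memCount_update_add_ind F i T e
    have := hF.memCount_le e
    have := hc e
    omega

lemma IsPacking.exists_raise_coverage {x s : V} {m : ℕ}
    (hF : IsPacking r (c - ind {(x, s)}) F) (hc : 1 ≤ c (x, s)) (hxs : x ≠ s)
    (hx : m ≤ coverage r F x) (hs : m ≤ coverage r F s + 1) :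
    ∃ G : ι → Finset (V × V), IsPacking r c G ∧ (∀ v, coverage r F v ≤ coverage r G v) ∧
      m ≤ coverage r G s := by
  by_cases hdone : m ≤ coverage r F s
  · exact ⟨F, hF.mono tsub_le_self, fun _ => le_rfl, hdone⟩
  obtain ⟨i, hxi, hsi⟩ :=
    exists_mem_and_notMem_of_memCount_lt (show coverage r F s < coverage r F x by omega)
  obtain ⟨hT, hsub⟩ := (hF.isArborescence i).insert_arc hxi s
  refine ⟨_, hF.update i hT ((hF.loopless i).insert hxs) fun e => ?_,
    coverage_le_coverage_update hsub, ?_⟩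
  · simp only [ind, Pi.sub_apply, mem_insert, mem_singleton]
    split_ifs <;> simp_all
  · rw [coverage_update_of_notMem hsi (snd_mem_arbVerts (mem_insert_self _ _))]
    omega

end Packings

section Unsplitting

variable {V ι : Type*} [DecidableEq V] [Fintype ι] {r u s y z : V} {c c' : V × V → ℕ}
  {F : ι → Finset (V × V)}

lemma SplitsOff.one_le (hsplit : SplitsOff c c' u s y) (hys : y ≠ s) : 1 ≤ c (u, s) := by
  have := hsplit (u, s)
  simp [ind, hys.symm] at this
  omega

lemma IsPacking.unsplit_of_forall_notMem (hF : IsPacking r c' F)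
    (hsplit : SplitsOff c c' u s y) (huy : ∀ i, (u, y) ∉ F i) :
    IsPacking r (c - ind {(u, s)}) F := by
  refine { hF with memCount_le := fun e => ?_ }
  by_cases he : e = (u, y)
  · subst he
    simp [memCount, huy]
  · have := hsplit e
    have := hF.memCount_le e
    simp only [ind, mem_singleton, he, if_false, Pi.sub_apply] at *
    omega

variable [DecidableEq ι]

lemma IsPacking.unsplit_reroute (hF : IsPacking r c' F) (hsplit : SplitsOff c c' u s y)
    (hus : u ≠ s) (hys : y ≠ s) {i : ι} (huy : (u, y) ∈ F i) (hsi : s ∉ arbVerts r (F i)) :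
    ∃ G : ι → Finset (V × V), IsPacking r c G ∧ coverage r F s < coverage r G s ∧
      ∀ v, coverage r F v ≤ coverage r G v := by
  have hFi := hF.isArborescence i
  obtain ⟨hT, hsub⟩ := hFi.reroute (u := u) (y := y) (s := s) (erase_subset _ _)
    (fun e he he' => .inl (by_contra fun h => he' (mem_erase.2 ⟨h, he⟩)))
    (hFi.reach (fst_mem_arbVerts huy)).erase_out_arc
  refine ⟨_, hF.update i hT ((((hF.loopless i).subset (erase_subset _ _)).insert hys.symm).insert
    hus) fun e => ?_, ?_, coverage_le_coverage_update hsub⟩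
  · have := hsplit e
    have := ind_insert_le (u, s) (insert (s, y) ((F i).erase (u, y))) e
    have := ind_insert_le (s, y) ((F i).erase (u, y)) e
    have := ind_erase_add huy e
    omega
  · rw [coverage_update_of_notMem hsi (snd_mem_arbVerts (mem_insert_self _ _))]
    omega

lemma IsPacking.unsplit_shortcut (hF : IsPacking r c' F) (hsplit : SplitsOff c c' u s y)
    (hys : y ≠ s) {i : ι} (huy : (u, y) ∈ F i) (hs : Reach r ((F i).erase (u, y)) s) :
    ∃ G : ι → Finset (V × V), IsPacking r (c - ind {(u, s)}) G ∧
      ∀ v, coverage r F v ≤ coverage r G v := by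
  obtain ⟨hT, hsub⟩ := (hF.isArborescence i).shortcut hs
  refine ⟨_, hF.update i hT (((hF.loopless i).subset (erase_subset _ _)).insert hys.symm)
    fun e => ?_, coverage_le_coverage_update hsub⟩
  have := hsplit e
  have := ind_insert_le (s, y) ((F i).erase (u, y)) e
  have := ind_erase_add huy e
  have := ind_singleton_add_ind_singleton_le (show (u, s) ≠ (u, y) by simp [hys.symm]) e
  simp only [Pi.sub_apply]
  omega

lemma IsPacking.unsplit_replace (hF : IsPacking r c' F) (hsplit : SplitsOff c c' u s y)
    (hus : u ≠ s) (hys : y ≠ s) {i : ι} (huy : (u, y) ∈ F i) (hzs : (z, s) ∈ F i)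
    (hs : ¬ Reach r ((F i).erase (u, y)) s) :
    1 ≤ c (z, s) ∧ ∃ G : ι → Finset (V × V), IsPacking r (c - ind {(z, s)}) G ∧
      ∀ v, coverage r F v ≤ coverage r G v := by
  have hne : (z, s) ≠ (u, y) := by simp [hys.symm]
  have hczs : 1 ≤ c (z, s) := by
    have hcount := (hF.memCount_le (z, s)).trans_lt'
      (card_pos.2 ⟨i, mem_filter.2 ⟨mem_univ i, hzs⟩⟩)
    have h := hsplit (z, s)
    simp only [ind, mem_singleton, hne, if_false] at h
    omega
  have hFi := hF.isArborescence i
  have hA : ∀ e ∈ F i, e ∉ ((F i).erase (u, y)).erase (z, s) → e = (u, y) ∨ e.2 = s := by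
    intro e he he'
    by_cases h : e = (u, y)
    · exact .inl h
    · refine .inr (by_contra fun h' => he' (mem_erase.2 ⟨?_, mem_erase.2 ⟨h, he⟩⟩))
      rintro rfl
      exact h' rfl
  obtain ⟨hT, hsub⟩ := hFi.reroute (u := u) (y := y) (s := s)
    ((erase_subset _ _).trans (erase_subset _ _)) hA
    ((hFi.reach (fst_mem_arbVerts huy)).erase_out_arc.erase_of_not_reach hs)
  refine ⟨hczs, _, hF.update i hT ((((hF.loopless i).subset
    ((erase_subset _ _).trans (erase_subset _ _))).insert hys.symm).insert hus) fun e => ?_,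
    coverage_le_coverage_update hsub⟩
  have := hsplit e
  have := ind_insert_le (u, s) (insert (s, y) (((F i).erase (u, y)).erase (z, s))) e
  have := ind_insert_le (s, y) (((F i).erase (u, y)).erase (z, s)) e
  have := ind_erase_add (mem_erase.2 ⟨hne, hzs⟩) e
  have := ind_erase_add huy e
  have : ind {(z, s)} e ≤ c e := by unfold ind; split_ifs <;> simp_all
  simp only [Pi.sub_apply]
  omega

lemma IsPacking.exists_unsplit (hF : IsPacking r c' F) (hsplit : SplitsOff c c' u s y)
    (hsr : s ≠ r) (hus : u ≠ s) (hys : y ≠ s) :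
    (∃ G : ι → Finset (V × V), IsPacking r c G ∧
      coverage r F s < coverage r G s ∧ ∀ v, coverage r F v ≤ coverage r G v) ∨
    ∃ x, x ≠ s ∧ 1 ≤ c (x, s) ∧ ∃ G : ι → Finset (V × V),
      IsPacking r (c - ind {(x, s)}) G ∧ ∀ v, coverage r F v ≤ coverage r G v := by
  by_cases huy : ∃ i, (u, y) ∈ F i
  swap
  · exact .inr ⟨u, hus, hsplit.one_le hys, F,
      hF.unsplit_of_forall_notMem hsplit (not_exists.1 huy), fun _ => le_rfl⟩
  obtain ⟨i, huy⟩ := huy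
  by_cases hsi : s ∈ arbVerts r (F i)
  swap
  · exact .inl (hF.unsplit_reroute hsplit hus hys huy hsi)
  by_cases hs : Reach r ((F i).erase (u, y)) s
  · exact .inr ⟨u, hus, hsplit.one_le hys, hF.unsplit_shortcut hsplit hys huy hs⟩
  · obtain ⟨z, hzs⟩ := (hF.isArborescence i).exists_mem_snd_eq hsi hsr
    exact .inr ⟨z, hF.loopless i _ hzs, hF.unsplit_replace hsplit hus hys huy hzs hs⟩

end Unsplitting

section Lifting

variable {V ι : Type*} [Fintype V] [DecidableEq V] [Fintype ι] [DecidableEq ι] {w : V → V → ℕ}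
  {r u s y : V}

lemma exists_packing_of_splitOff (hsr : s ≠ r) (hus : u ≠ s) (hys : y ≠ s) (hws : 1 ≤ w u s)
    (hwy : 1 ≤ w s y) (hmin : ∀ x, x ≠ r → x ≠ s → 1 ≤ w x s → lambdaW w r s ≤ lambdaW w r x)
    (hpres : ∀ v, v ≠ r → v ≠ s → lambdaW w r v ≤ lambdaW (splitOff w u s y) r v)
    {F : ι → Finset (V × V)} (hF : IsPacking r (Function.uncurry (splitOff w u s y)) F)
    (hcov : ∀ v, v ≠ r →
      min (Fintype.card ι) (lambdaW (splitOff w u s y) r v) ≤ coverage r F v) :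
    ∃ G : ι → Finset (V × V), IsPacking r (Function.uncurry w) G ∧
      ∀ v, v ≠ r → min (Fintype.card ι) (lambdaW w r v) ≤ coverage r G v := by
  set m := min (Fintype.card ι) (lambdaW w r s)
  have hms : m ≤ coverage r F s + 1 := by
    have := hcov s hsr
    have := lambdaW_le_lambdaW_splitOff_add_one hus hws hwy hsr
    omega
  have hcov' : ∀ v, v ≠ r → v ≠ s → min (Fintype.card ι) (lambdaW w r v) ≤ coverage r F v :=
    fun v hvr hvs => (min_le_min_left _ (hpres v hvr hvs)).trans (hcov v hvr)
  suffices ∃ G : ι → Finset (V × V), IsPacking r (Function.uncurry w) G ∧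
      (∀ v, coverage r F v ≤ coverage r G v) ∧ m ≤ coverage r G s by
    obtain ⟨G, hG, hFG, hGs⟩ := this
    refine ⟨G, hG, fun v hvr => ?_⟩
    by_cases hvs : v = s
    · exact hvs ▸ hGs
    · exact (hcov' v hvr hvs).trans (hFG v)
  rcases hF.exists_unsplit (splitsOff_splitOff hus hws hwy) hsr hus hys with
    ⟨G, hG, hGs, hFG⟩ | ⟨x, hxs, hwx, G, hG, hFG⟩
  · exact ⟨G, hG, hFG, by omega⟩
  have hx : m ≤ coverage r G x := by
    by_cases hxr : x = r
    · rw [hxr, coverage_root]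
      exact min_le_left _ _
    · exact (min_le_min_left _ (hmin x hxr hxs hwx)).trans ((hcov' x hxr hxs).trans (hFG x))
  obtain ⟨G', hG', hGG', hG's⟩ :=
    hG.exists_raise_coverage hwx hxs hx (hms.trans (Nat.add_le_add_right (hFG s) 1))
  exact ⟨G', hG', fun v => (hFG v).trans (hGG' v), hG's⟩

theorem Eulerian.exists_packing (hE : Eulerian w) (r : V) (ι : Type*) [Fintype ι]
    [DecidableEq ι] :
    ∃ F : ι → Finset (V × V), IsPacking r (Function.uncurry w) F ∧
      ∀ v, v ≠ r → min (Fintype.card ι) (lambdaW w r v) ≤ coverage r F v := by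
  induction hn : ∑ e : V × V, w e.1 e.2 using Nat.strong_induction_on generalizing w with
  | _ n ih =>
  set active := univ.filter fun v => v ≠ r ∧ ∃ u, u ≠ v ∧ 1 ≤ w u v
  by_cases hact : active.Nonempty
  · obtain ⟨s, hs, hsmin⟩ := exists_min_image active (lambdaW w r) hact
    obtain ⟨hsr, u, hus, hws⟩ := (mem_filter.1 hs).2
    obtain ⟨y, hys, hwy, hpres⟩ := hE.exists_splitOff_lambdaW_le hsr hus hws
    obtain ⟨F, hF, hcov⟩ :=
      ih _ (hn ▸ sum_splitOff_lt hus hws hwy) (eulerian_splitOff hE hus hws hwy) rfl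
    refine exists_packing_of_splitOff hsr hus hys hws hwy (fun x hxr hxs hwx => hsmin x ?_)
      hpres hF hcov
    exact mem_filter.2 ⟨mem_univ x, hxr, (hE.exists_in_neighbor_iff x).2 ⟨s, hxs.symm, hwx⟩⟩
  · refine ⟨fun _ => ∅, isPacking_empty r _, fun v hvr => ?_⟩
    have hv : ∑ a ∈ univ.erase v, w a v = 0 := sum_eq_zero fun a ha => by
      by_contra h
      exact hact ⟨v, mem_filter.2
        ⟨mem_univ v, hvr, a, ne_of_mem_erase ha, Nat.one_le_iff_ne_zero.2 h⟩⟩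
    have := lambdaW_le_cutWeight w (mem_erase.2 ⟨hvr.symm, mem_univ r⟩) (notMem_erase v univ)
    rw [cutWeight_univ_erase, hv] at this
    simp [Nat.le_zero.1 this]

end Lifting

section Eulerization

variable {V : Type*} [Fintype V] [DecidableEq V] {w : V → V → ℕ} {r : V}

def eulerize (w : V → V → ℕ) (r : V) (a b : V) : ℕ :=
  w a b + if b = r then (∑ c, w c a) - ∑ c, w a c else 0

lemma eulerize_of_ne {a b : V} (hb : b ≠ r) : eulerize w r a b = w a b := by
  simp [eulerize, hb]

lemma eulerian_eulerize (hdeg : ∀ u : V, u ≠ r → ∑ a : V, w u a ≤ ∑ a : V, w a u) :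
    Eulerian (eulerize w r) := by
  refine eulerian_of_forall_ne r fun v hv => ?_
  simp only [eulerize, sum_add_distrib, sum_ite_eq', mem_univ, if_true, hv, if_false, add_zero]
  have := hdeg v hv
  omega

lemma cutWeight_eulerize {X : Finset V} (hr : r ∈ X) :
    cutWeight (eulerize w r) X = cutWeight w X :=
  sum_congr rfl fun _ _ => sum_congr rfl fun _ hq =>
    eulerize_of_ne fun h => mem_compl.1 hq (h ▸ hr)

lemma lambdaW_eulerize (v : V) : lambdaW (eulerize w r) r v = lambdaW w r v := by
  unfold lambdaW
  congr 1
  ext m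
  exact exists_congr fun X => and_congr_right fun hr => by rw [cutWeight_eulerize hr]

end Eulerization

/-- polynomial-time arborescence packing (existence form).
`w` are nonnegative integer arc weights on the digraph `D = (U ∪ {r}, A)` (arcs are pairs
with `w > 0`); weighted in-degree ≥ weighted out-degree for every `u ≠ r`.  For any `K ≥ 0`
there are out-arborescences `F_1,…,F_q` rooted at `r`, subgraphs of `D`, and positive integer
weights `γ_1,…,γ_q` with `∑ γ_i = K`, `∑_{i : e ∈ F_i} γ_i ≤ w_e` for every arc `e`, and
`∑_{i : u ∈ F_i} γ_i ≥ min{K, λ_D(r,u)}` for every `u ∈ U`. -/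
theorem arborescence_packing
    {V : Type*} [Fintype V] [DecidableEq V] (r : V) (w : V → V → ℕ)
    (hdeg : ∀ u : V, u ≠ r → ∑ a : V, w u a ≤ ∑ a : V, w a u)
    (K : ℕ) :
    ∃ (q : ℕ) (F : Fin q → Finset (V × V)) (γ : Fin q → ℕ),
      (∀ i, IsArborescence r (F i)) ∧
      (∀ i, ∀ e ∈ F i, 0 < w e.1 e.2) ∧
      (∀ i, 0 < γ i) ∧
      (∑ i, γ i = K) ∧
      (∀ e : V × V, ∑ i ∈ univ.filter (fun i => e ∈ F i), γ i ≤ w e.1 e.2) ∧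
      (∀ u : V, u ≠ r →
        min K (lambdaW w r u) ≤ ∑ i ∈ univ.filter (fun i => u ∈ arbVerts r (F i)), γ i) := by
  obtain ⟨F, hF, hcov⟩ := (eulerian_eulerize hdeg).exists_packing r (Fin K)
  obtain ⟨hG, hFG⟩ :=
    hF.filter_snd_ne (c' := Function.uncurry w) fun e he => (eulerize_of_ne he).le
  refine ⟨K, _, fun _ => 1, hG.isArborescence, fun i e he => hG.pos_of_mem he, fun _ => one_pos,
    by simp, fun e => by simpa [memCount, Function.uncurry] using hG.memCount_le e,
    fun v hv => ?_⟩
  simpa [lambdaW_eulerize, coverage, memCount] using (hcov v hv).trans (hFG v)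
end

section
/- Let G = (V,E) be a complete undirected graph with root r ∈ V and metric edge costs {c_e}, and let λ ≥ 0. Then there exists a rooted tree T_λ (a subtree of G containing r) such that for every finite collection 𝒞 of r-rooted paths (possibly non-simple, i.e., walks starting at r), c(T_λ) + λ·|V ∖ V(T_λ)| ≤ ∑_{P∈𝒞} c(P) + λ·|V ∖ ⋃_{P∈𝒞} V(P)|. -/
open Finset

/-- `c` is a (semi-)metric cost function. -/
def IsMetricCost {V : Type*} (c : V → V → ℝ) : Prop :=
  (∀ u, c u u = 0) ∧ (∀ u v, 0 ≤ c u v) ∧ (∀ u v, c u v = c v u) ∧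
    ∀ u v x, c u x ≤ c u v + c v x

/-- Cost of a walk (a list of vertices): sum of the costs of consecutive edges,
counted with multiplicity. -/
def walkCost {V : Type*} (c : V → V → ℝ) : List V → ℝ
  | [] => 0
  | [_] => 0
  | a :: b :: l => c a b + walkCost c (b :: l)

/-- A rooted tree: a tree in the complete graph on `V` containing the root `r`. -/
structure RTree (V : Type*) (r : V) where
  verts : Finset V
  root_mem : r ∈ verts
  parent : V → V
  parent_mem : ∀ v ∈ verts, parent v ∈ verts
  reaches : ∀ v ∈ verts, ∃ m : ℕ, parent^[m] v = r

/-- Total edge cost of a rooted tree. -/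
noncomputable def treeCost {V : Type*} [DecidableEq V] {r : V}
    (c : V → V → ℝ) (T : RTree V r) : ℝ :=
  ∑ v ∈ T.verts.erase r, c (T.parent v) v

/-- The union of the vertex sets of a collection of walks. -/
def unionVerts {V : Type*} [DecidableEq V] (𝒞 : List (List V)) : Finset V :=
  𝒞.foldr (fun P s => P.toFinset ∪ s) ∅

/-!
Walking along a rooted walk and attaching each newly visited vertex to its predecessor turns
the walk into a rooted tree spanning its vertices, of cost at most the walk's cost (costs are
nonnegative). Doing this for every walk of a collection gives a tree covering their union at cost
at most the total walk cost. Since there are only finitely many rooted trees on a finite vertex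
set, a tree minimizing the prize-collecting objective beats every collection at once.
-/

namespace RTree

variable {V : Type*} [DecidableEq V] {r : V}

instance [Finite V] : Finite (RTree V r) :=
  Finite.of_injective (fun T : RTree V r => (T.verts, T.parent)) <| by
    rintro ⟨_, _, _, _, _⟩ ⟨_, _, _, _, _⟩ h
    cases h
    rfl

def singleton (r : V) : RTree V r where
  verts := {r}
  root_mem := mem_singleton_self r
  parent := fun _ => r
  parent_mem := fun _ _ => mem_singleton_self r
  reaches := fun _ _ => ⟨1, rfl⟩

@[simp]
lemma treeCost_singleton (c : V → V → ℝ) : treeCost c (singleton r) = 0 := by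
  simp [treeCost, singleton]

lemma iterate_update_parent (T : RTree V r) {a b : V} (hb : b ∉ T.verts) (m : ℕ) :
    ∀ v ∈ T.verts, (Function.update T.parent b a)^[m] v = T.parent^[m] v := by
  induction m with
  | zero => intro v _; rfl
  | succ m ih =>
    intro v hv
    have hvb : v ≠ b := ne_of_mem_of_not_mem hv hb
    rw [Function.iterate_succ_apply, Function.iterate_succ_apply,
      Function.update_of_ne hvb, ih _ (T.parent_mem v hv)]

def insertLeaf (T : RTree V r) {a b : V} (ha : a ∈ T.verts) (hb : b ∉ T.verts) : RTree V r where
  verts := insert b T.verts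
  root_mem := mem_insert_of_mem T.root_mem
  parent := Function.update T.parent b a
  parent_mem := by
    intro v hv
    rcases eq_or_ne v b with rfl | hvb
    · simpa using mem_insert_of_mem ha
    · rw [Function.update_of_ne hvb]
      exact mem_insert_of_mem (T.parent_mem v ((mem_insert.1 hv).resolve_left hvb))
  reaches := by
    intro v hv
    rcases mem_insert.1 hv with rfl | hvT
    · obtain ⟨m, hm⟩ := T.reaches a ha
      refine ⟨m + 1, ?_⟩
      rw [Function.iterate_succ_apply, Function.update_self, T.iterate_update_parent hb m a ha, hm]
    · obtain ⟨m, hm⟩ := T.reaches v hvT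
      exact ⟨m, by rw [T.iterate_update_parent hb m v hvT, hm]⟩

lemma treeCost_insertLeaf (c : V → V → ℝ) (T : RTree V r) {a b : V} (ha : a ∈ T.verts)
    (hb : b ∉ T.verts) : treeCost c (T.insertLeaf ha hb) = c a b + treeCost c T := by
  have hbr : b ≠ r := ne_of_mem_of_not_mem T.root_mem hb |>.symm
  have hb' : b ∉ T.verts.erase r := fun h => hb (mem_of_mem_erase h)
  simp only [treeCost, insertLeaf, erase_insert_of_ne hbr, sum_insert hb', Function.update_self]
  congr 1
  refine sum_congr rfl fun v hv => ?_
  rw [Function.update_of_ne (ne_of_mem_of_not_mem hv hb')]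

variable {c : V → V → ℝ}

lemma exists_extend_walk (hc : ∀ u v, 0 ≤ c u v) :
    ∀ (P : List V) (T : RTree V r), (∀ x ∈ P.head?, x ∈ T.verts) →
      ∃ T' : RTree V r, T.verts ⊆ T'.verts ∧ P.toFinset ⊆ T'.verts ∧
        treeCost c T' ≤ treeCost c T + walkCost c P
  | [], T, _ => ⟨T, Subset.rfl, by simp, by simp [walkCost]⟩
  | [a], T, h => ⟨T, Subset.rfl, by simpa using h, by simp [walkCost]⟩
  | a :: b :: P, T, h => by
    have ha : a ∈ T.verts := h a rfl
    by_cases hb : b ∈ T.verts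
    · obtain ⟨T', hTT', hPT', hcost⟩ := exists_extend_walk hc (b :: P) T (by simpa using hb)
      refine ⟨T', hTT', ?_, ?_⟩
      · rw [List.toFinset_cons]
        exact insert_subset (hTT' ha) hPT'
      · simp only [walkCost]
        linarith [hc a b]
    · obtain ⟨T', hTT', hPT', hcost⟩ :=
        exists_extend_walk hc (b :: P) (T.insertLeaf ha hb) (by simp [insertLeaf])
      have hTT'' : T.verts ⊆ T'.verts := (subset_insert b T.verts).trans hTT'
      refine ⟨T', hTT'', ?_, ?_⟩
      · rw [List.toFinset_cons]
        exact insert_subset (hTT'' ha) hPT'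
      · rw [treeCost_insertLeaf] at hcost
        simp only [walkCost]
        linarith

lemma exists_extend_walks (hc : ∀ u v, 0 ≤ c u v) :
    ∀ (𝒞 : List (List V)) (T : RTree V r), (∀ P ∈ 𝒞, P.head? = some r) →
      ∃ T' : RTree V r, T.verts ⊆ T'.verts ∧ unionVerts 𝒞 ⊆ T'.verts ∧
        treeCost c T' ≤ treeCost c T + (𝒞.map (walkCost c)).sum
  | [], T, _ => ⟨T, Subset.rfl, by simp [unionVerts], by simp⟩
  | P :: 𝒞, T, h => by
    obtain ⟨T₁, hTT₁, hPT₁, hcost₁⟩ := exists_extend_walk hc P T (by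
      simp [h P List.mem_cons_self, T.root_mem])
    obtain ⟨T', hT₁T', h𝒞T', hcost'⟩ :=
      exists_extend_walks hc 𝒞 T₁ fun Q hQ => h Q (List.mem_cons_of_mem _ hQ)
    refine ⟨T', hTT₁.trans hT₁T', union_subset (hPT₁.trans hT₁T') h𝒞T', ?_⟩
    simp only [List.map_cons, List.sum_cons]
    linarith

lemma exists_cover_walks (hc : ∀ u v, 0 ≤ c u v) (𝒞 : List (List V))
    (h𝒞 : ∀ P ∈ 𝒞, P.head? = some r) :
    ∃ T : RTree V r, unionVerts 𝒞 ⊆ T.verts ∧ treeCost c T ≤ (𝒞.map (walkCost c)).sum := by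
  obtain ⟨T, -, hcover, hcost⟩ := exists_extend_walks hc 𝒞 (singleton r) h𝒞
  exact ⟨T, hcover, by simpa using hcost⟩

end RTree

/-- there is a rooted tree `T_λ` whose prize-collecting objective
(with uniform penalty `λ`) is at most that of any finite collection of
(possibly non-simple) `r`-rooted paths. -/
theorem pc_tree_vs_path_collections
    {V : Type*} [Fintype V] [DecidableEq V] (r : V)
    (c : V → V → ℝ) (hc : IsMetricCost c)
    (lam : ℝ) (hlam : 0 ≤ lam) :
    ∃ T : RTree V r,
      ∀ 𝒞 : List (List V), (∀ P ∈ 𝒞, P.head? = some r) →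
        treeCost c T + lam * ((univ \ T.verts).card : ℝ) ≤
          (𝒞.map (walkCost c)).sum + lam * ((univ \ unionVerts 𝒞).card : ℝ) := by
  have : Nonempty (RTree V r) := ⟨RTree.singleton r⟩
  obtain ⟨T, hTmin⟩ := Finite.exists_min
    fun T : RTree V r => treeCost c T + lam * ((univ \ T.verts).card : ℝ)
  refine ⟨T, fun 𝒞 h𝒞 => ?_⟩
  obtain ⟨T', hcover, hcost⟩ := RTree.exists_cover_walks hc.2.1 𝒞 h𝒞
  have hcard : ((univ \ T'.verts).card : ℝ) ≤ (univ \ unionVerts 𝒞).card := by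
    exact_mod_cast card_le_card (sdiff_subset_sdiff Subset.rfl hcover)
  linarith [hTmin T', mul_le_mul_of_nonneg_left hcard hlam]
end

section
/- Let (V,c) be a finite metric space with a distinguished root r ∈ V, let d : V → ℝ≥0 be node service times with d_r = 0, and let k ≥ 1 be an integer. Let Q be a tree on a subset of V containing r (a rooted tree), let S ⊆ V(Q), and let L = max_{u∈S} (c(r,u) + d_u) (L = 0 if S is empty). Then there exist k cycles Z_1, …, Z_k — closed walks in the complete graph on V starting and ending at r — whose vertex sets together cover S, such that for every i = 1,…,k: c(Z_i) + 2·d(V(Z_i)) ≤ 2·(c(Q) + d(V(Q)))/k + 2L, where c(Z) is the total edge cost of the walk Z, V(Z) its vertex set, c(Q) the total edge cost of Q, and d(X) := ∑_{v∈X} d_v. -/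
open Finset

/-!
Doubling the edges of `Q` gives a closed walk from `r` of cost `2 c(Q)`; by the triangle inequality
it can be shortcut to a walk `r, w, r` that visits each vertex of `S` exactly once. With the
vertex-weighted cost `c(u,v) + d_u + d_v` the quantity `c(Z) + 2 d(V(Z))` of a cycle through `r`
is bounded by a plain walk cost, and for `r, w, r` that walk cost is at most `2 (c(Q) + d(V(Q)))`.
Cutting it greedily into `k` consecutive pieces of weighted cost at most a `k`-th of the total and
closing each piece at `r` costs two extra edges `r u`, each of weighted cost at most `L`.
-/

section Walks

variable {V : Type*} (c : V → V → ℝ)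

lemma walkCost_cons_of_ne_nil (x : V) {l : List V} (hl : l ≠ []) :
    walkCost c (x :: l) = c x (l.head hl) + walkCost c l := by
  obtain ⟨a, t, rfl⟩ := List.exists_cons_of_ne_nil hl
  rfl

lemma walkCost_concat (y : V) : ∀ {l : List V} (hl : l ≠ []),
    walkCost c (l ++ [y]) = walkCost c l + c (l.getLast hl) y
  | [a], _ => by simp [walkCost]
  | a :: b :: t, _ => by
    simp only [List.cons_append, walkCost, List.getLast_cons_cons]
    rw [← List.cons_append, walkCost_concat y (List.cons_ne_nil b t)]
    ring

lemma walkCost_append_cons (a : V) (t : List V) : ∀ s : List V,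
    walkCost c (s ++ a :: t) = walkCost c (s ++ [a]) + walkCost c (a :: t)
  | [] => by simp [walkCost]
  | [x] => by simp [walkCost]
  | x :: y :: s => by
    simp only [List.cons_append, walkCost]
    rw [← List.cons_append, ← List.cons_append, walkCost_append_cons a t (y :: s)]
    ring

lemma walkCost_splice (p v : V) (A B : List V) :
    walkCost c (A ++ p :: v :: p :: B) = walkCost c (A ++ p :: B) + c p v + c v p := by
  rw [walkCost_append_cons, walkCost_append_cons c p B]
  simp only [walkCost]
  ring

lemma walkCost_cons_append_of_head?_of_getLast? {r : V} (hrr : c r r = 0) {l : List V}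
    (hh : l.head? = some r) (hl : l.getLast? = some r) :
    walkCost c (r :: l ++ [r]) = walkCost c l := by
  obtain ⟨t, rfl⟩ := List.head?_eq_some_iff.1 hh
  rw [List.getLast?_eq_some_getLast (List.cons_ne_nil r t), Option.some_inj] at hl
  rw [List.cons_append, walkCost_cons_of_ne_nil c r (by simp), List.head_append_of_ne_nil (by simp),
    walkCost_concat c r (List.cons_ne_nil r t), hl]
  simp [hrr]

lemma walkCost_cons_append_singleton_le (hsymm : ∀ u v, c u v = c v u) {x : V} {s : List V}
    {L : ℝ} (hL : ∀ u ∈ s, c x u ≤ L) (hxx : c x x ≤ 2 * L) :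
    walkCost c (x :: s ++ [x]) ≤ walkCost c s + 2 * L := by
  rcases eq_or_ne s [] with rfl | hs
  · simpa [walkCost] using hxx
  rw [List.cons_append, walkCost_cons_of_ne_nil c x (by simp), List.head_append_of_ne_nil hs,
    walkCost_concat c x hs, hsymm _ x]
  linarith [hL _ (List.head_mem hs), hL _ (List.getLast_mem hs)]

lemma walkCost_nonneg (hnn : ∀ u v, 0 ≤ c u v) : ∀ l : List V, 0 ≤ walkCost c l
  | [] | [_] => le_rfl
  | _ :: b :: l => add_nonneg (hnn _ _) (walkCost_nonneg hnn (b :: l))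

lemma walkCost_cons_le (hnn : ∀ u v, 0 ≤ c u v) (htri : ∀ u v x, c u x ≤ c u v + c v x)
    (x a : V) : ∀ l : List V, walkCost c (x :: l) ≤ c x a + walkCost c (a :: l)
  | [] => by simpa [walkCost] using hnn x a
  | b :: t => by
    simp only [walkCost]
    linarith [htri x a b]

lemma walkCost_cons_le_of_sublist (hnn : ∀ u v, 0 ≤ c u v)
    (htri : ∀ u v x, c u x ≤ c u v + c v x) {l₁ l₂ : List V} (h : l₂.Sublist l₁) (x : V) :
    walkCost c (x :: l₂) ≤ walkCost c (x :: l₁) := by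
  induction h generalizing x with
  | slnil => exact le_rfl
  | cons a _ ih => exact (ih x).trans (walkCost_cons_le c hnn htri x a _)
  | cons_cons a _ ih => simpa only [walkCost] using add_le_add_right (ih a) (c x a)

end Walks

section VertexWeights

variable {V : Type*} (c : V → V → ℝ) (d : V → ℝ)

lemma walkCost_add_vertexWeights {x y : V} : ∀ {l : List V}, l.head? = some x →
    l.getLast? = some y →
    walkCost (fun u v => c u v + d u + d v) l + d x + d y = walkCost c l + 2 * (l.map d).sum
  | [a], hx, hy => by
    obtain rfl : a = x := by simpa using hx
    obtain rfl : a = y := by simpa using hy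
    simp [walkCost]
    ring
  | a :: b :: t, hx, hy => by
    obtain rfl : a = x := by simpa using hx
    have ih := walkCost_add_vertexWeights (l := b :: t) rfl (by simpa using hy)
    simp only [walkCost, List.map_cons, List.sum_cons] at ih ⊢
    linarith

lemma sum_toFinset_le_sum_map [DecidableEq V] (hd : ∀ v, 0 ≤ d v) (l : List V) :
    ∑ v ∈ l.toFinset, d v ≤ (l.map d).sum := by
  rw [Finset.sum_list_map_count]
  exact Finset.sum_le_sum fun v hv =>
    le_smul_of_one_le_left (hd v) (List.one_le_count_iff.2 (List.mem_toFinset.1 hv))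

end VertexWeights

section Splitting

variable {V : Type*} (c : V → V → ℝ)

/- Greedy: the first piece is the longest prefix of cost at most `walkCost c w / (k + 1)`; one more
vertex would exceed that bound, so the remainder costs less than `k / (k + 1)` of the total. -/
theorem exists_ofFn_flatten_eq_walkCost_le (hnn : ∀ u v, 0 ≤ c u v) (k : ℕ) : ∀ w : List V,
    ∃ seg : Fin (k + 1) → List V, (List.ofFn seg).flatten = w ∧
      ∀ i, ((k : ℝ) + 1) * walkCost c (seg i) ≤ walkCost c w := by
  induction k with
  | zero => exact fun w => ⟨fun _ => w, by simp, fun _ => by simp⟩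
  | succ k ih =>
    intro w
    set P : ℕ → Prop := fun j => ((k + 1 : ℕ) + 1 : ℝ) * walkCost c (w.take j) ≤ walkCost c w
    set j := Nat.findGreatest P w.length
    have hPj : P j :=
      Nat.findGreatest_spec (Nat.zero_le _) (by simpa [P, walkCost] using walkCost_nonneg c hnn w)
    rcases (Nat.findGreatest_le (P := P) w.length).lt_or_eq with hj | hj
    · obtain ⟨seg, hflat, hseg⟩ := ih (w.drop j)
      have hsplit : walkCost c w = walkCost c (w.take (j + 1)) + walkCost c (w.drop j) := by
        conv_lhs => rw [← List.take_append_drop j w, List.drop_eq_getElem_cons hj]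
        rw [walkCost_append_cons, List.take_concat_get', ← List.drop_eq_getElem_cons hj]
      have hnext : walkCost c w < ((k + 1 : ℕ) + 1 : ℝ) * walkCost c (w.take (j + 1)) :=
        not_le.1 (Nat.findGreatest_is_greatest (Nat.lt_succ_self j) hj)
      refine ⟨Fin.cons (w.take j) seg, ?_, Fin.cases hPj fun i => ?_⟩
      · rw [List.ofFn_succ]
        simp only [Fin.cons_zero, Fin.cons_succ, List.flatten_cons, hflat, List.take_append_drop]
      · have hi := hseg i
        simp only [Fin.cons_succ, Nat.cast_succ] at hi hnext ⊢
        nlinarith [walkCost_nonneg c hnn (seg i)]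
    · refine ⟨Fin.cons w fun _ => [], by simp [List.ofFn_succ], Fin.cases ?_ fun _ => ?_⟩
      · simpa [P, show j = w.length from hj] using hPj
      · simpa [walkCost] using walkCost_nonneg c hnn w

end Splitting

section Tours

variable {V : Type*} [DecidableEq V] (c : V → V → ℝ)

/- Strong induction on `T`: a vertex of maximal height `h` is a leaf; the tour of the rest is
extended by the detour `p v → v → p v`. -/
theorem exists_tour_of_parent (hsymm : ∀ u v, c u v = c v u) (p : V → V) (h : V → ℕ) (r : V)
    (T : Finset V) (hr : r ∈ T) (hT : ∀ v ∈ T, v ≠ r → p v ∈ T ∧ h (p v) < h v) :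
    ∃ l : List V, l.head? = some r ∧ l.getLast? = some r ∧ (∀ v ∈ T, v ∈ l) ∧
      walkCost c l = 2 * ∑ v ∈ T.erase r, c (p v) v := by
  induction T using Finset.strongInduction with
  | H T ih =>
    rcases (T.erase r).eq_empty_or_nonempty with hTr | hTr
    · refine ⟨[r], rfl, rfl, fun v hv => List.mem_singleton.2 ?_, by simp [hTr, walkCost]⟩
      by_contra hvr
      simpa [hTr] using Finset.mem_erase.2 ⟨hvr, hv⟩
    obtain ⟨v, hv, hvmax⟩ := Finset.exists_max_image (T.erase r) h hTr
    obtain ⟨hvr, hvT⟩ := Finset.mem_erase.1 hv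
    have hleaf : ∀ u ∈ T.erase v, u ≠ r → p u ∈ T.erase v ∧ h (p u) < h u := by
      intro u hu hur
      obtain ⟨huv, huT⟩ := Finset.mem_erase.1 hu
      obtain ⟨hpu, hlt⟩ := hT u huT hur
      have hpuv : p u ≠ v := fun e => (hvmax u (Finset.mem_erase.2 ⟨hur, huT⟩)).not_gt (e ▸ hlt)
      exact ⟨Finset.mem_erase.2 ⟨hpuv, hpu⟩, hlt⟩
    obtain ⟨l, hlh, hll, hlT, hlc⟩ :=
      ih (T.erase v) (Finset.erase_ssubset hvT) (Finset.mem_erase.2 ⟨Ne.symm hvr, hr⟩) hleaf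
    obtain ⟨hpv, hpvlt⟩ := hT v hvT hvr
    have hpv' : p v ∈ T.erase v := Finset.mem_erase.2 ⟨fun e => hpvlt.ne (congrArg h e), hpv⟩
    obtain ⟨A, B, rfl⟩ := List.append_of_mem (hlT _ hpv')
    refine ⟨A ++ p v :: v :: p v :: B, ?_, ?_, fun u hu => ?_, ?_⟩
    · cases A <;> simpa using hlh
    · rwa [show A ++ p v :: v :: p v :: B = (A ++ [p v, v]) ++ p v :: B by simp,
        List.getLast?_append_cons, ← List.getLast?_append_cons A]
    · by_cases huv : u = v
      · simp [huv]
      · have := hlT u (Finset.mem_erase.2 ⟨huv, hu⟩)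
        simp only [List.mem_append, List.mem_cons] at this ⊢
        tauto
    · rw [walkCost_splice, hlc, hsymm v, ← Finset.add_sum_erase _ _ hv, Finset.erase_right_comm]
      ring

noncomputable def RTree.depth {r : V} (Q : RTree V r) (v : V) : ℕ :=
  if hv : v ∈ Q.verts then Nat.find (Q.reaches v hv) else 0

lemma RTree.depth_parent_lt {r : V} (Q : RTree V r) {v : V} (hv : v ∈ Q.verts) (hvr : v ≠ r) :
    Q.depth (Q.parent v) < Q.depth v := by
  have hpv := Q.parent_mem v hv
  rw [RTree.depth, RTree.depth, dif_pos hv, dif_pos hpv]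
  have hspec := Nat.find_spec (Q.reaches v hv)
  obtain ⟨m, hm⟩ : ∃ m, Nat.find (Q.reaches v hv) = m + 1 :=
    Nat.exists_eq_add_one.2 (Nat.pos_of_ne_zero fun h0 => hvr (by rwa [h0] at hspec))
  have hreach : Q.parent^[m] (Q.parent v) = r := by
    rwa [← Function.iterate_succ_apply, ← Nat.add_one, ← hm]
  exact hm ▸ Nat.lt_succ_of_le (Nat.find_le hreach)

theorem RTree.exists_tour {r : V} (hsymm : ∀ u v, c u v = c v u) (Q : RTree V r) :
    ∃ l : List V, l.head? = some r ∧ l.getLast? = some r ∧ (∀ v ∈ Q.verts, v ∈ l) ∧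
      walkCost c l = 2 * treeCost c Q :=
  exists_tour_of_parent c hsymm Q.parent Q.depth r Q.verts Q.root_mem
    fun v hv hvr => ⟨Q.parent_mem v hv, Q.depth_parent_lt hv hvr⟩

end Tours

section Cycles

variable {V : Type*} (c : V → V → ℝ)

theorem exists_cycles_cover_walkCost_le (hnn : ∀ u v, 0 ≤ c u v) (hsymm : ∀ u v, c u v = c v u)
    (r : V) (w : List V) {L : ℝ} (hL : ∀ u ∈ r :: w ++ [r], c r u ≤ L) (m : ℕ) :
    ∃ Z : Fin (m + 1) → List V,
      (∀ i, (Z i).head? = some r ∧ (Z i).getLast? = some r) ∧ (∀ v ∈ w, ∃ i, v ∈ Z i) ∧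
      ∀ i, walkCost c (Z i) ≤ walkCost c (r :: w ++ [r]) / ((m : ℝ) + 1) + 2 * L := by
  obtain ⟨seg, hflat, hseg⟩ := exists_ofFn_flatten_eq_walkCost_le c hnn m (r :: w ++ [r])
  have hmem : ∀ u, u ∈ r :: w ++ [r] ↔ ∃ i, u ∈ seg i := by
    simp only [← hflat, List.mem_flatten, List.mem_ofFn]
    exact fun u => ⟨fun ⟨_, ⟨i, hi⟩, hu⟩ => ⟨i, hi ▸ hu⟩, fun ⟨i, hu⟩ => ⟨_, ⟨i, rfl⟩, hu⟩⟩
  refine ⟨fun i => r :: seg i ++ [r], fun _ => ⟨rfl, List.getLast?_concat⟩, fun v hv => ?_,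
    fun i => ?_⟩
  · obtain ⟨i, hi⟩ := (hmem v).1 (by simp [hv])
    exact ⟨i, by simp [hi]⟩
  have hrr : c r r ≤ 2 * L := by linarith [hL r (by simp), hnn r r]
  calc walkCost c (r :: seg i ++ [r])
      ≤ walkCost c (seg i) + 2 * L :=
        walkCost_cons_append_singleton_le c hsymm (fun u hu => hL u ((hmem u).2 ⟨i, hu⟩)) hrr
    _ ≤ walkCost c (r :: w ++ [r]) / ((m : ℝ) + 1) + 2 * L := by
        gcongr
        rw [le_div_iff₀ (by positivity), mul_comm]
        exact hseg i

theorem exists_cycles_cover_walkCost_add_sum_le [DecidableEq V] (hnn : ∀ u v, 0 ≤ c u v)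
    (hsymm : ∀ u v, c u v = c v u) {r : V} (hrr : c r r = 0) {d : V → ℝ} (hd : ∀ v, 0 ≤ d v)
    (hdr : d r = 0) (w : List V) {L : ℝ} (hL0 : 0 ≤ L) (hL : ∀ u ∈ w, c r u + d u ≤ L) (m : ℕ) :
    ∃ Z : Fin (m + 1) → List V,
      (∀ i, (Z i).head? = some r ∧ (Z i).getLast? = some r) ∧ (∀ v ∈ w, ∃ i, v ∈ Z i) ∧
      ∀ i, walkCost c (Z i) + 2 * ∑ v ∈ (Z i).toFinset, d v ≤
        (walkCost c (r :: w ++ [r]) + 2 * (w.map d).sum) / ((m : ℝ) + 1) + 2 * L := by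
  set c' : V → V → ℝ := fun u v => c u v + d u + d v
  have hweight : ∀ {l : List V}, l.head? = some r → l.getLast? = some r →
      walkCost c' l = walkCost c l + 2 * (l.map d).sum := fun hh hl => by
    simpa [hdr] using walkCost_add_vertexWeights c d hh hl
  have hL' : ∀ u ∈ r :: w ++ [r], c' r u ≤ L := by
    intro u hu
    rw [List.mem_append, List.mem_cons, List.mem_singleton] at hu
    rcases hu with (rfl | hu) | rfl
    · simpa [c', hrr, hdr] using hL0
    · simpa [c', hdr] using hL u hu
    · simpa [c', hrr, hdr] using hL0
  obtain ⟨Z, hZr, hZw, hZc⟩ := exists_cycles_cover_walkCost_le c'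
    (fun u v => by have := hnn u v; have := hd u; have := hd v; positivity)
    (fun u v => by simp only [c', hsymm u v]; ring) r w hL' m
  refine ⟨Z, hZr, hZw, fun i => ?_⟩
  calc walkCost c (Z i) + 2 * ∑ v ∈ (Z i).toFinset, d v
      ≤ walkCost c' (Z i) := by
        rw [hweight (hZr i).1 (hZr i).2]
        linarith [sum_toFinset_le_sum_map d hd (Z i)]
    _ ≤ _ := by
        convert hZc i using 3
        rw [hweight rfl List.getLast?_concat]
        simp [hdr]

end Cycles

section Shortcut

variable {V : Type*} [DecidableEq V] (c : V → V → ℝ)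

theorem exists_nodup_shortcut (hc : IsMetricCost c) {r : V} {l : List V} (hh : l.head? = some r)
    (hl : l.getLast? = some r) (S : Finset V) (hS : ∀ v ∈ S, v ∈ l) :
    ∃ w : List V, w.Nodup ∧ w.toFinset = S ∧ walkCost c (r :: w ++ [r]) ≤ walkCost c l := by
  obtain ⟨hc0, hnn, -, htri⟩ := hc
  refine ⟨(l.filter (· ∈ S)).dedup, List.nodup_dedup _, ?_, ?_⟩
  · ext v
    simpa using fun hv => hS v hv
  · rw [← walkCost_cons_append_of_head?_of_getLast? c (hc0 r) hh hl]
    exact walkCost_cons_le_of_sublist c hnn htri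
      (((List.dedup_sublist _).trans List.filter_sublist).append_right [r]) r

end Shortcut

theorem tree_to_k_cycles_general
    {V : Type*} [DecidableEq V]
    (c : V → V → ℝ) (hc : IsMetricCost c) (r : V)
    (d : V → ℝ) (hd : ∀ v, 0 ≤ d v) (hdr : d r = 0)
    (k : ℕ) (hk : 1 ≤ k)
    (Q : RTree V r) (S : Finset V) (hS : S ⊆ Q.verts)
    (L : ℝ) (hL : IsGreatest (insert (0 : ℝ) ((fun u => c r u + d u) '' ↑S)) L) :
    ∃ Z : Fin k → List V,
      (∀ i, (Z i).head? = some r ∧ (Z i).getLast? = some r) ∧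
      (∀ v ∈ S, ∃ i, v ∈ Z i) ∧
      ∀ i, walkCost c (Z i) + 2 * ∑ v ∈ (Z i).toFinset, d v ≤
        2 * (treeCost c Q + ∑ v ∈ Q.verts, d v) / (k : ℝ) + 2 * L := by
  obtain ⟨m, rfl⟩ : ∃ m, k = m + 1 := ⟨k - 1, by omega⟩
  obtain ⟨hc0, hnn, hsymm, -⟩ := id hc
  obtain ⟨l, hlh, hll, hlQ, hlc⟩ := Q.exists_tour c hsymm
  obtain ⟨w, hwnd, hwS, hwc⟩ := exists_nodup_shortcut c hc hlh hll S fun v hv => hlQ v (hS hv)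
  have hwd : (w.map d).sum ≤ ∑ v ∈ Q.verts, d v := by
    rw [← List.sum_toFinset _ hwnd, hwS]
    exact Finset.sum_le_sum_of_subset_of_nonneg hS fun v _ _ => hd v
  have hLw : ∀ u ∈ w, c r u + d u ≤ L := fun u hu =>
    hL.2 (Set.mem_insert_of_mem _ ⟨u, by simpa [← hwS] using hu, rfl⟩)
  obtain ⟨Z, hZr, hZw, hZc⟩ := exists_cycles_cover_walkCost_add_sum_le c hnn hsymm (hc0 r) hd hdr
    w (hL.2 (Set.mem_insert _ _)) hLw m
  refine ⟨Z, hZr, fun v hv => hZw v (by simpa [← hwS] using hv), fun i => (hZc i).trans ?_⟩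
  push_cast
  gcongr
  linarith

/-- tree-breaking lemma: given a rooted tree `Q`, `S ⊆ V(Q)` and
`L = max_{u∈S} (c(r,u) + d_u)` (with `L = 0` for empty `S`; note all these values are
nonnegative, so `L` is the greatest element of `{0} ∪ {c(r,u) + d_u : u ∈ S}`), there are
`k` cycles `Z_1,…,Z_k` through `r` covering `S` with
`c(Z_i) + 2·d(V(Z_i)) ≤ 2·(c(Q) + d(V(Q)))/k + 2L` for every `i`. -/
theorem tree_to_k_cycles
    {V : Type*} [Fintype V] [DecidableEq V]
    (c : V → V → ℝ) (hc : IsMetricCost c) (r : V)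
    (d : V → ℝ) (hd : ∀ v, 0 ≤ d v) (hdr : d r = 0)
    (k : ℕ) (hk : 1 ≤ k)
    (Q : RTree V r) (S : Finset V) (hS : S ⊆ Q.verts)
    (L : ℝ) (hL : IsGreatest (insert (0 : ℝ) ((fun u => c r u + d u) '' ↑S)) L) :
    ∃ Z : Fin k → List V,
      (∀ i, (Z i).head? = some r ∧ (Z i).getLast? = some r) ∧
      (∀ v ∈ S, ∃ i, v ∈ Z i) ∧
      ∀ i, walkCost c (Z i) + 2 * ∑ v ∈ (Z i).toFinset, d v ≤
        2 * (treeCost c Q + ∑ v ∈ Q.verts, d v) / (k : ℝ) + 2 * L :=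
  tree_to_k_cycles_general c hc r d hd hdr k hk Q S hS L hL
end

section
/- For every integer k ≥ 1, every real κ ≥ 1, and all reals y_1, …, y_k ∈ [0,1] with ∑_{i=1}^k y_i ≤ 1, it holds that ∏_{i=1}^k (1 − y_i/κ) ≤ e^{−1/κ} + (1 − e^{−1/κ})·(1 − ∑_{i=1}^k y_i). -/
/-! Bounding each factor by `1 - x ≤ e^{-x}` gives `∏ (1 - y_i/κ) ≤ e^{-s/κ}` with `s = ∑ y_i`.
Since `s ∈ [0, 1]`, convexity of `t ↦ e^{-t/κ}` places `e^{-s/κ}` below the chord joining its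
values at `t = 0` and `t = 1`, which is the right-hand side. -/

namespace Real

theorem prod_one_sub_le_exp_neg_sum {ι : Type*} (s : Finset ι) {f : ι → ℝ}
    (hf : ∀ i ∈ s, f i ≤ 1) : ∏ i ∈ s, (1 - f i) ≤ exp (-∑ i ∈ s, f i) := by
  calc ∏ i ∈ s, (1 - f i)
      ≤ ∏ i ∈ s, exp (-f i) :=
        Finset.prod_le_prod (fun i hi ↦ sub_nonneg.2 (hf i hi)) fun i _ ↦ one_sub_le_exp_neg _
    _ = exp (-∑ i ∈ s, f i) := by rw [← exp_sum, Finset.sum_neg_distrib]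

theorem exp_mul_le_one_sub_add_mul_exp {t : ℝ} (ht₀ : 0 ≤ t) (ht₁ : t ≤ 1) (x : ℝ) :
    exp (t * x) ≤ 1 - t + t * exp x := by
  have := convexOn_exp.2 (Set.mem_univ 0) (Set.mem_univ x) (sub_nonneg.2 ht₁) ht₀ (by ring)
  simpa only [smul_eq_mul, mul_zero, zero_add, exp_zero, mul_one] using this

end Real

theorem product_coverage_bound_general
    (k : ℕ) (κ : ℝ) (hκ : 1 ≤ κ)
    (y : Fin k → ℝ) (hy : ∀ i, y i ∈ Set.Icc (0 : ℝ) 1)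
    (hsum : ∑ i, y i ≤ 1) :
    ∏ i, (1 - y i / κ) ≤
      Real.exp (-1 / κ) + (1 - Real.exp (-1 / κ)) * (1 - ∑ i, y i) := by
  have hκ₀ : 0 < κ := zero_lt_one.trans_le hκ
  have hyκ : ∀ i ∈ Finset.univ, y i / κ ≤ 1 :=
    fun i _ ↦ (div_le_one hκ₀).2 ((hy i).2.trans hκ)
  have hsum₀ : 0 ≤ ∑ i, y i := Finset.sum_nonneg fun i _ ↦ (hy i).1
  calc ∏ i, (1 - y i / κ)
      ≤ Real.exp (-∑ i, y i / κ) := Real.prod_one_sub_le_exp_neg_sum _ hyκ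
    _ = Real.exp ((∑ i, y i) * (-1 / κ)) := by rw [← Finset.sum_div]; ring_nf
    _ ≤ 1 - ∑ i, y i + (∑ i, y i) * Real.exp (-1 / κ) :=
        Real.exp_mul_le_one_sub_add_mul_exp hsum₀ hsum _
    _ = Real.exp (-1 / κ) + (1 - Real.exp (-1 / κ)) * (1 - ∑ i, y i) := by ring

/-- the key product estimate in the analysis of the rounding algorithm
for multi-depot k-MLP: for `k ≥ 1`, `κ ≥ 1` and `y_1,…,y_k ∈ [0,1]` with `∑ y_i ≤ 1`,
`∏_i (1 − y_i/κ) ≤ e^{−1/κ} + (1 − e^{−1/κ})·(1 − ∑_i y_i)`. -/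
theorem product_coverage_bound
    (k : ℕ) (hk : 1 ≤ k) (κ : ℝ) (hκ : 1 ≤ κ)
    (y : Fin k → ℝ) (hy : ∀ i, y i ∈ Set.Icc (0 : ℝ) 1)
    (hsum : ∑ i, y i ≤ 1) :
    ∏ i, (1 - y i / κ) ≤
      Real.exp (-1 / κ) + (1 - Real.exp (-1 / κ)) * (1 - ∑ i, y i) :=
  product_coverage_bound_general k κ hκ y hy hsum
end

section
/- Let c > 1 and q ≥ 1 be reals. For h ∈ [1,c), define σ_q(h) := min{ h·c^j : j ∈ ℤ≥0, h·c^j ≥ q }. Then ∫_0^1 σ_q(c^γ) dγ = ((c − 1)/ln c)·q; that is, if Γ is uniformly distributed on [0,1) and σ(q) is the smallest element of the geometric sequence (c^Γ·c^j)_{j≥0} that is at least q, then E[σ(q)] = ((c−1)/ln c)·q. -/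
open Real intervalIntegral

/-!
Write `t = log_c q`. The sequence `c^γ · c^j = c^(γ + j)` first reaches `q = c^t` at the
exponent `γ + j` that lies in `[t, t + 1)`, namely `t + fract (γ - t)`; so
`σ_q(c^γ) = q · c^(fract (γ - t))`. As `γ` runs over `[0, 1)`, `fract (γ - t)` runs over
`[0, 1)` once up to a translation, and `∫₀¹ c^u du = (c - 1) / log c`.
-/

/-- `σ_q(h)`: the smallest element of the geometric sequence `(h·c^j)_{j ∈ ℤ≥0}`
that is at least `q`. -/
noncomputable def sigmaGeom (c q h : ℝ) : ℝ :=
  sInf {x : ℝ | ∃ j : ℕ, x = h * c ^ j ∧ q ≤ x}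

theorem integral_const_rpow {c : ℝ} (hc : 0 < c) (hc1 : c ≠ 1) (a b : ℝ) :
    ∫ x in a..b, c ^ x = (c ^ b - c ^ a) / log c := by
  have hlog : log c ≠ 0 := log_ne_zero_of_pos_of_ne_one hc hc1
  have hderiv : ∀ x ∈ Set.uIcc a b, HasDerivAt (fun x ↦ c ^ x / log c) (c ^ x) x := by
    intro x _
    simpa [mul_div_cancel_right₀ _ hlog] using
      (hasStrictDerivAt_const_rpow hc x).hasDerivAt.div_const (log c)
  have hint : IntervalIntegrable (fun x ↦ c ^ x) MeasureTheory.volume a b :=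
    (continuous_const.rpow continuous_id fun _ ↦ Or.inl hc.ne').intervalIntegrable a b
  rw [integral_eq_sub_of_hasDerivAt hderiv hint, sub_div]

variable {E : Type*} [NormedAddCommGroup E] [NormedSpace ℝ E]

theorem integral_comp_fract (f : ℝ → E) :
    ∫ x in (0 : ℝ)..1, f (Int.fract x) = ∫ x in (0 : ℝ)..1, f x :=
  integral_congr_Ioo_of_le zero_le_one fun _ hx ↦ by
    rw [Int.fract_eq_self.mpr ⟨hx.1.le, hx.2⟩]

theorem integral_comp_fract_sub (f : ℝ → E) (t : ℝ) :
    ∫ x in (0 : ℝ)..1, f (Int.fract (x - t)) = ∫ x in (0 : ℝ)..1, f x := by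
  have hper : Function.Periodic (fun x ↦ f (Int.fract x)) 1 := fun x ↦ by
    simp only [Int.fract_add_one]
  have hshift := hper.intervalIntegral_add_eq (-t) 0
  rw [zero_add, neg_add_eq_sub] at hshift
  rw [integral_comp_sub_right (fun x ↦ f (Int.fract x)), zero_sub, hshift, integral_comp_fract]

theorem sigmaGeom_rpow {c q γ : ℝ} (hc : 1 < c) (hq : 0 < q) (hγ : γ < logb c q + 1) :
    sigmaGeom c q (c ^ γ) = q * c ^ Int.fract (γ - logb c q) := by
  set t := logb c q
  have hc0 : 0 < c := one_pos.trans hc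
  have hct : c ^ t = q := rpow_logb hc0 hc.ne' hq
  have hpow : ∀ j : ℕ, c ^ γ * c ^ j = c ^ (γ + j) := fun j ↦ by
    rw [rpow_add hc0, rpow_natCast]
  -- The least admissible `j ∈ ℤ` is `-⌊γ - t⌋`; `hγ` makes it a natural number.
  have hfloor : ⌊γ - t⌋ ≤ 0 := Int.floor_le_iff.mpr (by push_cast; linarith)
  set n := (-⌊γ - t⌋).toNat
  have hn : (n : ℝ) = -⌊γ - t⌋ := by
    exact_mod_cast Int.toNat_of_nonneg (neg_nonneg.mpr hfloor)
  have hexp : γ + n = t + Int.fract (γ - t) := by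
    rw [hn, Int.fract]; ring
  have hleast : IsLeast {x | ∃ j : ℕ, x = c ^ γ * c ^ j ∧ q ≤ x} (c ^ γ * c ^ n) := by
    refine ⟨⟨n, rfl, ?_⟩, ?_⟩
    · rw [hpow, hexp, ← hct, rpow_le_rpow_left_iff hc]
      linarith [Int.fract_nonneg (γ - t)]
    · rintro x ⟨j, rfl, hqx⟩
      rw [hpow, ← hct, rpow_le_rpow_left_iff hc] at hqx
      have hnj : (n : ℝ) ≤ j := by
        have : -(j : ℤ) ≤ ⌊γ - t⌋ := Int.le_floor.mpr (by push_cast; linarith)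
        rw [hn]
        exact_mod_cast neg_le.mp this
      rw [hpow, hpow, rpow_le_rpow_left_iff hc]
      linarith
  rw [sigmaGeom, hleast.csInf_eq, hpow, hexp, rpow_add hc0, hct]

/-- for reals `c > 1` and `q ≥ 1`,
`∫_0^1 σ_q(c^γ) dγ = ((c − 1)/ln c)·q`; i.e., if `Γ` is uniform on `[0,1)` and `σ(q)` is
the smallest element of the sequence `(c^Γ·c^j)_{j≥0}` that is at least `q`, then
`E[σ(q)] = ((c − 1)/ln c)·q`. -/
theorem expected_geometric_rounding
    (c q : ℝ) (hc : 1 < c) (hq : 1 ≤ q) :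
    ∫ γ in (0:ℝ)..1, sigmaGeom c q (c ^ γ) = ((c - 1) / Real.log c) * q := by
  have hq0 : 0 < q := one_pos.trans_le hq
  have ht : 0 ≤ logb c q := logb_nonneg hc hq
  calc ∫ γ in (0:ℝ)..1, sigmaGeom c q (c ^ γ)
      = ∫ γ in (0:ℝ)..1, q * c ^ Int.fract (γ - logb c q) :=
        integral_congr_Ioo_of_le zero_le_one fun γ hγ ↦
          sigmaGeom_rpow hc hq0 (by linarith [hγ.2])
    _ = q * ∫ u in (0:ℝ)..1, c ^ u := by
        rw [integral_const_mul, integral_comp_fract_sub (fun u ↦ c ^ u)]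
    _ = ((c - 1) / Real.log c) * q := by
        rw [integral_const_rpow (one_pos.trans hc) hc.ne', rpow_one, rpow_zero, mul_comm]
end
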